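/- Let k > 0 and ε ∈ (0, 1/3]. Suppose w : [0,1] → ℝ is twice continuously differentiable and ζ : [0,1] → ℝ is continuous, with w(0) = w(1) = 0, ζ(0) = ζ(1) = 0, and w''(z) − k² w(z) = k ζ(z) for all z ∈ [0,1], and suppose T : [0,1] → ℝ is continuously differentiable with T(1) = 0. Then ∫_{1−ε}^{1} ( z^{−2} + ε ) |w(z) T(z)| dz ≤ (6c₁/5) k^{1/2} ε^{5/2} (∫₀¹ ζ² dz)^{1/2} (∫₀¹ T'² dz)^{1/2}, where c₁ := 3^{3/4}/2^{3/2}. -/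

import Mathlib

open MeasureTheory Set intervalIntegral

/-!
For `w'' = k² w + k ζ` with `w(0) = w(1) = 0`, write `u = ‖w'‖₂²`, `v = k² ‖w‖₂²`, `Y = ‖ζ‖₂²`.
Testing the equation against `w` gives `u + v = -k ⟨w, ζ⟩`, hence `(u + v)² ≤ v Y` by
Cauchy–Schwarz, and squaring it gives `‖w''‖₂² = k² (Y - v - 2u)`; maximising over `u, v` yields
`4 ‖w'‖₂² ‖w''‖₂² ≤ (27/64) k² Y²`. As `w'` vanishes somewhere (Rolle),
`w'(s)⁴ ≤ 4 ‖w'‖₂² ‖w''‖₂²`, so `|w'| ≤ c₁ k^{1/2} ‖ζ‖₂` and `|w(z)| ≤ c₁ k^{1/2} ‖ζ‖₂ (1 - z)`.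
With `|T(z)| ≤ (1 - z)^{1/2} ‖T'‖₂` and `z⁻² + ε ≤ 3` on the layer, the integrand is at most
`3 c₁ k^{1/2} ‖ζ‖₂ ‖T'‖₂ (1 - z)^{3/2}`, whose integral over `(1 - ε, 1)` brings `(2/5) ε^{5/2}`.
-/

theorem sq_integral_mul_le {f g : ℝ → ℝ} (hf : Continuous f) (hg : Continuous g) {a b : ℝ}
    (hab : a ≤ b) :
    (∫ x in a..b, f x * g x) ^ 2 ≤ (∫ x in a..b, f x ^ 2) * ∫ x in a..b, g x ^ 2 := by
  have hf2 : IntervalIntegrable (fun x => f x ^ 2) volume a b := (hf.pow 2).intervalIntegrable _ _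
  have hg2 : IntervalIntegrable (fun x => g x ^ 2) volume a b := (hg.pow 2).intervalIntegrable _ _
  have hfg : IntervalIntegrable (fun x => f x * g x) volume a b :=
    (hf.mul hg).intervalIntegrable _ _
  have quadratic_nonneg : ∀ t : ℝ, 0 ≤ (∫ x in a..b, f x ^ 2) * (t * t) +
      (2 * ∫ x in a..b, f x * g x) * t + ∫ x in a..b, g x ^ 2 := by
    intro t
    have expand : (fun x => (t * f x + g x) ^ 2) =
        fun x => t * t * f x ^ 2 + 2 * t * (f x * g x) + g x ^ 2 := by
      ext; ring
    have := integral_nonneg_of_forall (μ := volume) hab fun x => sq_nonneg (t * f x + g x)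
    rw [expand, integral_add ((hf2.const_mul _).add (hfg.const_mul _)) hg2,
      integral_add (hf2.const_mul _) (hfg.const_mul _), intervalIntegral.integral_const_mul,
      intervalIntegral.integral_const_mul] at this
    linarith
  have := discrim_le_zero quadratic_nonneg
  rw [discrim] at this
  nlinarith

theorem abs_integral_le_integral_abs_of_mem_Icc {h : ℝ → ℝ} {a b c s : ℝ}
    (hh : IntervalIntegrable h volume a b) (hc : c ∈ Icc a b) (hs : s ∈ Icc a b) :
    |∫ x in c..s, h x| ≤ ∫ x in a..b, |h x| := by
  have hab : a ≤ b := hc.1.trans hc.2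
  have hsub : uIoc c s ⊆ Ioc a b := by
    rw [← uIoc_of_le hab]
    exact uIoc_subset_uIoc_of_uIcc_subset_uIcc
      (uIcc_subset_uIcc (Icc_subset_uIcc hc) (Icc_subset_uIcc hs))
  calc |∫ x in c..s, h x| ≤ ∫ x in uIoc c s, |h x| := norm_integral_le_integral_norm_uIoc (f := h)
    _ ≤ ∫ x in Ioc a b, |h x| :=
      setIntegral_mono_set (hh.1.norm) (ae_of_all _ fun _ => abs_nonneg _) hsub.eventuallyLE
    _ = ∫ x in a..b, |h x| := (integral_of_le hab).symm

theorem pow_four_le_four_mul_integral_sq_mul_integral_deriv_sq {f : ℝ → ℝ}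
    (hf : ContDiff ℝ 1 f) {a b c s : ℝ} (hc : c ∈ Icc a b) (hfc : f c = 0)
    (hs : s ∈ Icc a b) :
    f s ^ 4 ≤ 4 * (∫ x in a..b, f x ^ 2) * ∫ x in a..b, deriv f x ^ 2 := by
  have hab : a ≤ b := hc.1.trans hc.2
  have hdf := hf.differentiable one_ne_zero
  have hcf' := hf.continuous_deriv_one
  have hcont : Continuous fun x => 2 * f x * deriv f x := by fun_prop
  set M := ∫ x in a..b, |f x| * |deriv f x|
  have ftc : f s ^ 2 = ∫ x in c..s, 2 * f x * deriv f x := by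
    rw [integral_eq_sub_of_hasDerivAt (f := fun x => f x ^ 2)
      (fun x _ => by simpa using (hdf x).hasDerivAt.fun_pow 2)
      (hcont.intervalIntegrable _ _), hfc]
    ring
  have hsq : f s ^ 2 ≤ 2 * M := by
    calc f s ^ 2 ≤ |∫ x in c..s, 2 * f x * deriv f x| := ftc ▸ le_abs_self _
      _ ≤ ∫ x in a..b, |2 * f x * deriv f x| :=
        abs_integral_le_integral_abs_of_mem_Icc (hcont.intervalIntegrable _ _) hc hs
      _ = 2 * M := by
        rw [← intervalIntegral.integral_const_mul]
        simp only [abs_mul, abs_two, mul_assoc]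
  have hM : M ^ 2 ≤ (∫ x in a..b, f x ^ 2) * ∫ x in a..b, deriv f x ^ 2 := by
    simpa only [sq_abs] using sq_integral_mul_le hdf.continuous.abs hcf'.abs hab
  nlinarith [sq_nonneg (f s), pow_le_pow_left₀ (sq_nonneg (f s)) hsq 2]

theorem integral_mul_deriv_deriv_eq_neg_integral_deriv_sq {w : ℝ → ℝ} (hw : ContDiff ℝ 2 w)
    {a b : ℝ} (ha : w a = 0) (hb : w b = 0) :
    ∫ x in a..b, w x * deriv (deriv w) x = -∫ x in a..b, deriv w x ^ 2 := by
  have hw' : ContDiff ℝ 1 (deriv w) := hw.deriv'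
  rw [integral_mul_deriv_eq_deriv_mul (fun x _ => (hw.differentiable two_ne_zero x).hasDerivAt)
    (fun x _ => (hw'.differentiable one_ne_zero x).hasDerivAt)
    (hw'.continuous.intervalIntegrable _ _) (hw'.continuous_deriv_one.intervalIntegrable _ _),
    ha, hb]
  simp [sq]

-- Equality holds at `u = 3Y/16`, `v = Y/16`.
theorem mul_sub_sub_le_of_sq_add_le_mul {u v Y : ℝ} (hu : 0 ≤ u) (hv : 0 ≤ v)
    (h : (u + v) ^ 2 ≤ v * Y) : 4 * (u * (Y - v - 2 * u)) ≤ 27 / 64 * Y ^ 2 := by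
  nlinarith [sq_nonneg (16 * u - 3 * Y), mul_nonneg hu hv]

noncomputable def c₁ : ℝ := 3 ^ ((3 : ℝ) / 4) / 2 ^ ((3 : ℝ) / 2)

theorem c₁_nonneg : 0 ≤ c₁ := by unfold c₁; positivity

theorem c₁_pow_four : c₁ ^ 4 = 27 / 64 := by
  rw [c₁, div_pow, ← Real.rpow_natCast, ← Real.rpow_natCast, ← Real.rpow_mul (by norm_num),
    ← Real.rpow_mul (by norm_num)]
  norm_num

theorem rpow_half_pow_four {x : ℝ} (hx : 0 ≤ x) : (x ^ (1 / 2 : ℝ)) ^ 4 = x ^ 2 := by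
  rw [← Real.rpow_natCast, ← Real.rpow_mul hx]
  norm_num

section PseudoVorticity

variable {k a b : ℝ} {w ζ : ℝ → ℝ}

theorem four_mul_integral_deriv_sq_mul_integral_deriv_deriv_sq_le (hab : a ≤ b)
    (hw : ContDiff ℝ 2 w) (hζ : Continuous ζ) (ha : w a = 0) (hb : w b = 0)
    (hrel : ∀ z ∈ Icc a b, deriv (deriv w) z = k ^ 2 * w z + k * ζ z) :
    4 * (∫ x in a..b, deriv w x ^ 2) * (∫ x in a..b, deriv (deriv w) x ^ 2) ≤
      27 / 64 * k ^ 2 * (∫ x in a..b, ζ x ^ 2) ^ 2 := by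
  have hcw := hw.continuous
  have hw2 : IntervalIntegrable (fun x => w x ^ 2) volume a b := (hcw.pow 2).intervalIntegrable _ _
  have hwζ : IntervalIntegrable (fun x => w x * ζ x) volume a b :=
    (hcw.mul hζ).intervalIntegrable _ _
  have hζ2 : IntervalIntegrable (fun x => ζ x ^ 2) volume a b := (hζ.pow 2).intervalIntegrable _ _
  set u := ∫ x in a..b, deriv w x ^ 2
  set B := ∫ x in a..b, w x ^ 2
  set S := ∫ x in a..b, w x * ζ x
  set Y := ∫ x in a..b, ζ x ^ 2
  have on_Icc {F G : ℝ → ℝ} (h : ∀ x ∈ Icc a b, F x = G x) :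
      ∫ x in a..b, F x = ∫ x in a..b, G x :=
    integral_congr fun x hx => h x (uIcc_of_le hab ▸ hx)
  have energy : u + k ^ 2 * B = -(k * S) := by
    have := integral_mul_deriv_deriv_eq_neg_integral_deriv_sq hw ha hb
    rw [on_Icc (G := fun x => k ^ 2 * w x ^ 2 + k * (w x * ζ x))
        (fun x hx => by rw [hrel x hx]; ring),
      integral_add (hw2.const_mul _) (hwζ.const_mul _), intervalIntegral.integral_const_mul,
      intervalIntegral.integral_const_mul] at this
    linarith
  have hQ : ∫ x in a..b, deriv (deriv w) x ^ 2 = k ^ 2 * (Y - k ^ 2 * B - 2 * u) := by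
    rw [on_Icc (G := fun x => k ^ 4 * w x ^ 2 + 2 * k ^ 3 * (w x * ζ x) + k ^ 2 * ζ x ^ 2)
        (fun x hx => by rw [hrel x hx]; ring),
      integral_add ((hw2.const_mul _).add (hwζ.const_mul _)) (hζ2.const_mul _),
      integral_add (hw2.const_mul _) (hwζ.const_mul _), intervalIntegral.integral_const_mul,
      intervalIntegral.integral_const_mul, intervalIntegral.integral_const_mul]
    linear_combination (2 * k ^ 2) * energy
  have hCS : (u + k ^ 2 * B) ^ 2 ≤ k ^ 2 * B * Y := by
    rw [energy]
    nlinarith [sq_integral_mul_le hcw hζ hab, sq_nonneg k]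
  have nonneg {F : ℝ → ℝ} : 0 ≤ ∫ x in a..b, F x ^ 2 :=
    integral_nonneg_of_forall hab fun _ => sq_nonneg _
  have := mul_sub_sub_le_of_sq_add_le_mul nonneg (mul_nonneg (sq_nonneg k) nonneg) hCS
  rw [hQ]
  nlinarith [sq_nonneg k]

theorem deriv_pow_four_le_of_pseudoVorticity (hab : a < b) (hw : ContDiff ℝ 2 w)
    (hζ : Continuous ζ) (ha : w a = 0) (hb : w b = 0)
    (hrel : ∀ z ∈ Icc a b, deriv (deriv w) z = k ^ 2 * w z + k * ζ z) {s : ℝ}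
    (hs : s ∈ Icc a b) :
    deriv w s ^ 4 ≤ 27 / 64 * k ^ 2 * (∫ x in a..b, ζ x ^ 2) ^ 2 := by
  obtain ⟨c, hc, hwc⟩ := exists_deriv_eq_zero hab hw.continuous.continuousOn (ha.trans hb.symm)
  exact (pow_four_le_four_mul_integral_sq_mul_integral_deriv_sq hw.deriv'
    (Ioo_subset_Icc_self hc) hwc hs).trans
    (four_mul_integral_deriv_sq_mul_integral_deriv_deriv_sq_le hab.le hw hζ ha hb hrel)

theorem abs_deriv_le_of_pseudoVorticity (hk : 0 ≤ k) (hab : a < b)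
    (hw : ContDiff ℝ 2 w) (hζ : Continuous ζ) (ha : w a = 0) (hb : w b = 0)
    (hrel : ∀ z ∈ Icc a b, deriv (deriv w) z = k ^ 2 * w z + k * ζ z) {s : ℝ}
    (hs : s ∈ Icc a b) :
    |deriv w s| ≤ c₁ * k ^ (1 / 2 : ℝ) * (∫ x in a..b, ζ x ^ 2) ^ (1 / 2 : ℝ) := by
  have hY : 0 ≤ ∫ x in a..b, ζ x ^ 2 := integral_nonneg_of_forall hab.le fun _ => sq_nonneg _
  have h4 := deriv_pow_four_le_of_pseudoVorticity hab hw hζ ha hb hrel hs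
  refine (pow_le_pow_iff_left₀ (abs_nonneg _) (by have := c₁_nonneg; positivity)
    four_ne_zero).mp ?_
  rwa [mul_pow, mul_pow, c₁_pow_four, rpow_half_pow_four hk, rpow_half_pow_four hY,
    Even.pow_abs ⟨2, rfl⟩]

end PseudoVorticity

theorem abs_le_mul_sub_of_abs_deriv_le {f : ℝ → ℝ} {M z b : ℝ}
    (hf : ∀ x ∈ Icc z b, DifferentiableAt ℝ f x) (hfb : f b = 0) (hzb : z ≤ b)
    (hM : ∀ x ∈ Icc z b, |deriv f x| ≤ M) : |f z| ≤ M * (b - z) := by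
  have := (convex_Icc z b).norm_image_sub_le_of_norm_deriv_le hf hM
    (left_mem_Icc.mpr hzb) (right_mem_Icc.mpr hzb)
  rwa [hfb, zero_sub, norm_neg, Real.norm_eq_abs, Real.norm_eq_abs,
    abs_of_nonneg (sub_nonneg.mpr hzb)] at this

theorem abs_le_sub_rpow_mul_integral_deriv_sq_rpow {f : ℝ → ℝ} (hf : ContDiff ℝ 1 f)
    {a b z : ℝ} (hfb : f b = 0) (hz : z ∈ Icc a b) :
    |f z| ≤ (b - z) ^ (1 / 2 : ℝ) * (∫ x in a..b, deriv f x ^ 2) ^ (1 / 2 : ℝ) := by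
  have hcf' := hf.continuous_deriv_one
  have ftc : f z = -∫ x in z..b, deriv f x := by
    rw [integral_deriv_eq_sub (fun x _ => hf.differentiable one_ne_zero x)
      (hcf'.intervalIntegrable _ _), hfb]
    ring
  have hCS : (∫ x in z..b, deriv f x) ^ 2 ≤ (∫ x in z..b, deriv f x ^ 2) * (b - z) := by
    simpa using sq_integral_mul_le (g := fun _ => 1) hcf' continuous_const hz.2
  have hmono : ∫ x in z..b, deriv f x ^ 2 ≤ ∫ x in a..b, deriv f x ^ 2 :=
    integral_mono_interval hz.1 hz.2 le_rfl (ae_of_all _ fun _ => sq_nonneg _)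
      ((hcf'.pow 2).intervalIntegrable _ _)
  have hsq : f z ^ 2 ≤ (b - z) * ∫ x in a..b, deriv f x ^ 2 := by
    rw [ftc, neg_sq]
    nlinarith [sub_nonneg.mpr hz.2]
  rw [← Real.sqrt_eq_rpow, ← Real.sqrt_eq_rpow, ← Real.sqrt_mul (sub_nonneg.mpr hz.2)]
  exact Real.abs_le_sqrt hsq

theorem integral_sub_rpow {r : ℝ} (hr : -1 < r) (b ε : ℝ) :
    ∫ z in (b - ε)..b, (b - z) ^ r = ε ^ (r + 1) / (r + 1) := by
  rw [integral_comp_sub_left (fun x => x ^ r), sub_self, sub_sub_cancel, integral_rpow (.inl hr),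
    Real.zero_rpow (by linarith)]
  ring

theorem inv_sq_add_le_three {ε z : ℝ} (hε : ε ≤ 1 / 3) (hz : 1 - ε ≤ z) : z⁻¹ ^ 2 + ε ≤ 3 := by
  have hinv : z⁻¹ ≤ 3 / 2 := by
    rw [inv_le_comm₀ (by linarith) (by norm_num)]
    linarith
  nlinarith [inv_nonneg.mpr (by linarith : (0 : ℝ) ≤ z)]

theorem integral_le_of_le_mul_sub_rpow {f : ℝ → ℝ} {r b ε C : ℝ} (hr : -1 < r) (hε : 0 ≤ ε)
    (hf : IntervalIntegrable f volume (b - ε) b)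
    (h : ∀ z ∈ Icc (b - ε) b, f z ≤ C * (b - z) ^ r) :
    ∫ z in (b - ε)..b, f z ≤ C * (ε ^ (r + 1) / (r + 1)) := by
  have hint : IntervalIntegrable (fun z => C * (b - z) ^ r) volume (b - ε) b := by
    simpa using ((intervalIntegral.intervalIntegrable_rpow' hr (a := ε) (b := 0)).comp_sub_left b
      (by simp)).const_mul C
  calc ∫ z in (b - ε)..b, f z ≤ ∫ z in (b - ε)..b, C * (b - z) ^ r :=
        integral_mono_on (by linarith) hf hint h
    _ = C * (ε ^ (r + 1) / (r + 1)) := by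
        rw [intervalIntegral.integral_const_mul, integral_sub_rpow hr]

theorem inv_sq_add_mul_abs_mul_le {ε z x y A B : ℝ} (hε : ε ≤ 1 / 3) (hz : z ∈ Icc (1 - ε) 1)
    (hx : |x| ≤ A * (1 - z)) (hy : |y| ≤ (1 - z) ^ (1 / 2 : ℝ) * B) :
    (z⁻¹ ^ 2 + ε) * |x * y| ≤ 3 * A * B * (1 - z) ^ (3 / 2 : ℝ) := by
  calc (z⁻¹ ^ 2 + ε) * |x * y| ≤ 3 * (A * (1 - z) * ((1 - z) ^ (1 / 2 : ℝ) * B)) := by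
        rw [abs_mul]
        gcongr
        exacts [inv_sq_add_le_three hε hz.1, (abs_nonneg _).trans hx]
    _ = 3 * A * B * (1 - z) ^ (3 / 2 : ℝ) := by
        rw [show (3 / 2 : ℝ) = 1 + 1 / 2 by norm_num,
          Real.rpow_one_add' (sub_nonneg.mpr hz.2) (by norm_num)]
        ring

theorem upper_boundary_layer_estimate_stress_free_general
    (k ε : ℝ) (hk : 0 < k) (hε : ε ∈ Set.Ioc (0:ℝ) (1/3))
    (w ζ T : ℝ → ℝ) (hw : ContDiff ℝ 2 w) (hζ : Continuous ζ) (hT : ContDiff ℝ 1 T)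
    (hw0 : w 0 = 0) (hw1 : w 1 = 0)
    (hrel : ∀ z ∈ Set.Icc (0:ℝ) 1, iteratedDeriv 2 w z - k^2 * w z = k * ζ z)
    (hT1 : T 1 = 0) :
    (∫ z in (1-ε)..1, (z⁻¹^2 + ε) * |w z * T z|) ≤
      (6 * (3 ^ ((3:ℝ)/4) / 2 ^ ((3:ℝ)/2)) / 5) * k ^ ((1:ℝ)/2) * ε ^ ((5:ℝ)/2) *
        (∫ z in (0:ℝ)..1, (ζ z)^2) ^ ((1:ℝ)/2) *
        (∫ z in (0:ℝ)..1, (deriv T z)^2) ^ ((1:ℝ)/2) := by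
  obtain ⟨hε0, hε3⟩ := hε
  have hrel' (z : ℝ) (hz : z ∈ Icc (0:ℝ) 1) : deriv (deriv w) z = k ^ 2 * w z + k * ζ z := by
    have := hrel z hz
    rw [iteratedDeriv_succ, iteratedDeriv_one] at this
    linarith
  have hw' (z : ℝ) (hz : z ∈ Icc (0:ℝ) 1) :=
    abs_deriv_le_of_pseudoVorticity hk.le zero_lt_one hw hζ hw0 hw1 hrel' hz
  have hlayer (z : ℝ) (hz : z ∈ Icc (1 - ε) 1) := by
    have hz01 : Icc z 1 ⊆ Icc 0 1 := Icc_subset_Icc_left (by linarith [hz.1])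
    exact inv_sq_add_mul_abs_mul_le hε3 hz
      (abs_le_mul_sub_of_abs_deriv_le (fun x _ => hw.differentiable two_ne_zero x) hw1 hz.2
        fun x hx => hw' x (hz01 hx))
      (abs_le_sub_rpow_mul_integral_deriv_sq_rpow hT hT1 (hz01 ⟨le_rfl, hz.2⟩))
  have hint : IntervalIntegrable (fun z => (z⁻¹ ^ 2 + ε) * |w z * T z|) volume (1 - ε) 1 := by
    refine ContinuousOn.intervalIntegrable fun z hz => ?_
    have hz0 : z ≠ 0 := by
      rw [uIcc_of_le (by linarith)] at hz
      linarith [hz.1]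
    have hcw := hw.continuous
    have hcT := hT.continuous
    exact ContinuousAt.continuousWithinAt (by fun_prop (disch := exact hz0))
  refine (integral_le_of_le_mul_sub_rpow (by norm_num) hε0.le hint hlayer).trans_eq ?_
  norm_num [c₁]
  ring

/-- Upper boundary-layer estimate in the stress-free proof: for `ε ∈ (0,1/3]`, with the
pseudo-vorticity relation `w'' - k²w = kζ`, `w(0) = w(1) = ζ(0) = ζ(1) = 0` and `T(1) = 0`,
`∫_{1-ε}^1 (z⁻² + ε) |w T| ≤ (6c₁/5) k^{1/2} ε^{5/2} ‖ζ‖₂ ‖T'‖₂` with `c₁ = 3^{3/4}/2^{3/2}`. -/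
theorem upper_boundary_layer_estimate_stress_free
    (k ε : ℝ) (hk : 0 < k) (hε : ε ∈ Set.Ioc (0:ℝ) (1/3))
    (w ζ T : ℝ → ℝ) (hw : ContDiff ℝ 2 w) (hζ : Continuous ζ) (hT : ContDiff ℝ 1 T)
    (hw0 : w 0 = 0) (hw1 : w 1 = 0) (hζ0 : ζ 0 = 0) (hζ1 : ζ 1 = 0)
    (hrel : ∀ z ∈ Set.Icc (0:ℝ) 1, iteratedDeriv 2 w z - k^2 * w z = k * ζ z)
    (hT1 : T 1 = 0) :
    (∫ z in (1-ε)..1, (z⁻¹^2 + ε) * |w z * T z|) ≤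
      (6 * (3 ^ ((3:ℝ)/4) / 2 ^ ((3:ℝ)/2)) / 5) * k ^ ((1:ℝ)/2) * ε ^ ((5:ℝ)/2) *
        (∫ z in (0:ℝ)..1, (ζ z)^2) ^ ((1:ℝ)/2) *
        (∫ z in (0:ℝ)..1, (deriv T z)^2) ^ ((1:ℝ)/2) :=
  upper_boundary_layer_estimate_stress_free_general k ε hk hε w ζ T hw hζ hT hw0 hw1 hrel hT1
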